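/- arXiv:1410.5543 — 5 statements merged into one kernel-verified Lean document; each statement's English description precedes it below -/
import Mathlib

section
/- Let K be an abstract simplicial complex on the vertex set [m] and let J = (j_1,…,j_m) be an m-tuple of positive integers. Then the polyhedral product (D^{j_1},S^{j_1−1};…;D^{j_m},S^{j_m−1})^K is homeomorphic to the real moment-angle complex (D^1,S^0)^{K(J)}. -/
structure ASC (m : ℕ) where
  faces : Set (Finset (Fin m))
  empty_mem : ∅ ∈ faces
  down_closed : ∀ {σ τ : Finset (Fin m)}, σ ∈ faces → τ ⊆ σ → τ ∈ faces

variable {m : ℕ}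

/-- `d(J) = ∑ j_i` -/
def dJ (J : Fin m → ℕ) : ℕ := ∑ i, J i

/-- the block `B_i ⊆ [d(J)]` : positions `∑_{k<i} j_k ≤ r < ∑_{k≤i} j_k` (0-indexed). -/
def Bblk (J : Fin m → ℕ) (i : Fin m) : Finset (Fin (dJ J)) :=
  Finset.univ.filter fun r =>
    (∑ k ∈ Finset.Iio i, J k) ≤ (r : ℕ) ∧ (r : ℕ) < ∑ k ∈ Finset.Iic i, J k

/-- `τ` is a missing face of `K` : `τ ∉ K` but every proper subset of `τ` is a face. -/
def IsMissingFace (K : ASC m) (τ : Finset (Fin m)) : Prop :=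
  τ ∉ K.faces ∧ ∀ s ⊂ τ, s ∈ K.faces

/-- the faces of `K(J)`: subsets of `[d(J)]` containing no set `∪_{i∈τ} B_i`
for a missing face `τ` of `K`. -/
def KJfaces (K : ASC m) (J : Fin m → ℕ) : Set (Finset (Fin (dJ J))) :=
  {σ | ∀ τ : Finset (Fin m), IsMissingFace K τ → ¬ (τ.biUnion (Bblk J) ⊆ σ)}

open Classical in
/-- The real moment-angle complex `(D¹,S⁰)^F ⊆ [-1,1]^n`. -/
noncomputable def RMAC {n : ℕ} (F : Set (Finset (Fin n))) : Set (Fin n → ℝ) :=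
  {x | (∀ i, |x i| ≤ 1) ∧ (Finset.univ.filter fun i => |x i| < 1) ∈ F}

open Classical in
/-- The polyhedral product `(D^{j_1},S^{j_1-1};…;D^{j_m},S^{j_m-1})^K`, as the subspace of
`∏ D^{j_i}` of points `x` such that `{i : x_i ∈ D∖S}` is a face of `K`. -/
noncomputable def PolyProdDS (K : ASC m) (J : Fin m → ℕ) :
    Set (Π i : Fin m, EuclideanSpace ℝ (Fin (J i))) :=
  {x | (∀ i, ‖x i‖ ≤ 1) ∧ (Finset.univ.filter fun i => ‖x i‖ < 1) ∈ K.faces}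


/-!
A radial rescaling `x ↦ (‖x‖₂ / ‖x‖∞) • x` is a homeomorphism `ℝʲ → ℝʲ` carrying the Euclidean
norm to the sup norm, hence the pair `(Dʲ, Sʲ⁻¹)` to `([-1,1]ʲ, ∂[-1,1]ʲ)`. Doing this in each
factor and listing the `d(J)` resulting coordinates block by block, a point `x` of `∏ D^{jᵢ}` goes
to a point `y` of `[-1,1]^{d(J)}` with `‖xᵢ‖ < 1` iff `Bᵢ ⊆ σ := {r : |y_r| < 1}`. It remains to
see that `σ ∈ K(J)` iff `{i : Bᵢ ⊆ σ} ∈ K`, which holds because a set is a face of `K` iff it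
contains no missing face.
-/

open Finset

section Radial

variable {E F : Type*} [NormedAddCommGroup E] [NormedSpace ℝ E]
  [NormedAddCommGroup F] [NormedSpace ℝ F]

/-- At `x = 0` the scalar is `0 / 0 = 0`, so `radial e 0 = 0` needs no case split. -/
noncomputable def radial (e : E ≃L[ℝ] F) (x : E) : F := (‖x‖ / ‖e x‖) • e x

lemma radial_smul (e : E ≃L[ℝ] F) (t : ℝ) (x : E) : radial e (t • x) = t • radial e x := by
  rcases eq_or_ne t 0 with rfl | ht
  · simp [radial]
  · simp only [radial, map_smul, norm_smul, smul_smul,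
      mul_div_mul_left _ _ (norm_ne_zero_iff.2 ht)]
    rw [mul_comm]

lemma norm_radial (e : E ≃L[ℝ] F) (x : E) : ‖radial e x‖ = ‖x‖ := by
  rcases eq_or_ne x 0 with rfl | hx
  · simp [radial]
  · have hex : ‖e x‖ ≠ 0 := by simpa using hx
    simp [radial, norm_smul, hex]

lemma radial_symm_radial (e : E ≃L[ℝ] F) (x : E) : radial e.symm (radial e x) = x := by
  rcases eq_or_ne x 0 with rfl | hx
  · simp [radial]
  · have hex : ‖e x‖ ≠ 0 := by simpa using hx
    have hx' : ‖x‖ ≠ 0 := by simpa using hx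
    have hsymm : radial e.symm (e x) = (‖e x‖ / ‖x‖) • x := by simp [radial]
    change radial _ ((‖x‖ / ‖e x‖) • e x) = x
    rw [radial_smul, hsymm, smul_smul, div_mul_div_cancel₀ hex, div_self hx', one_smul]

lemma continuous_radial (e : E ≃L[ℝ] F) : Continuous (radial e) := by
  refine continuous_iff_continuousAt.2 fun x => ?_
  rcases eq_or_ne x 0 with rfl | hx
  · have h0 : radial e 0 = 0 := by simp [radial]
    rw [ContinuousAt, h0]
    exact squeeze_zero_norm (fun y => (norm_radial e y).le) tendsto_norm_zero
  · have hex : ‖e x‖ ≠ 0 := by simpa using hx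
    exact (continuous_norm.continuousAt.div e.continuous.norm.continuousAt hex).smul
      e.continuous.continuousAt

noncomputable def ContinuousLinearEquiv.radialHomeomorph (e : E ≃L[ℝ] F) : E ≃ₜ F where
  toFun := radial e
  invFun := radial e.symm
  left_inv := radial_symm_radial e
  right_inv := radial_symm_radial e.symm
  continuous_toFun := continuous_radial e
  continuous_invFun := continuous_radial e.symm

end Radial

def Homeomorph.piSigmaCurry {ι : Type*} {κ : ι → Type*} (X : Type*) [TopologicalSpace X] :
    ((Σ i, κ i) → X) ≃ₜ (Π i, κ i → X) where
  toEquiv := Equiv.piCurry fun _ _ => X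
  continuous_toFun := continuous_pi fun i => continuous_pi fun t =>
    continuous_apply (⟨i, t⟩ : Σ i, κ i)
  continuous_invFun := continuous_pi fun k => (continuous_apply k.2).comp (continuous_apply k.1)

section Blocks

variable (J : Fin m → ℕ)

lemma sum_Iio_add (i : Fin m) : ∑ k ∈ Iio i, J k + J i = ∑ k ∈ Iic i, J k := by
  rw [add_comm, ← sum_insert notMem_Iio_self, Iio_insert]

lemma sum_Iio_add_le_sum_Iio {i i' : Fin m} (h : i < i') :
    ∑ k ∈ Iio i, J k + J i ≤ ∑ k ∈ Iio i', J k := by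
  rw [sum_Iio_add]
  exact sum_le_sum_of_subset fun k hk => mem_Iio.2 ((mem_Iic.1 hk).trans_lt h)

lemma mem_Bblk (i : Fin m) (r : Fin (dJ J)) :
    r ∈ Bblk J i ↔ ∑ k ∈ Iio i, J k ≤ r ∧ (r : ℕ) < ∑ k ∈ Iio i, J k + J i := by
  simp [Bblk, sum_Iio_add]

def blockEquiv : (i : Fin m) × Fin (J i) ≃ Fin (dJ J) := finSigmaFinEquiv

lemma val_blockEquiv (k : (i : Fin m) × Fin (J i)) :
    (blockEquiv J k : ℕ) = ∑ l ∈ Iio k.1, J l + k.2 := by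
  refine (finSigmaFinEquiv_apply (n := J) k).trans (congrArg (· + _) ?_)
  exact sum_nbij (Fin.castLE k.1.2.le) (by simp [Fin.lt_def])
    (fun _ _ _ _ h => Fin.castLE_injective _ h)
    (fun l hl => ⟨⟨l, Fin.lt_def.1 (mem_Iio.1 (mem_coe.1 hl))⟩, by simp, rfl⟩)
    (fun _ _ => rfl)

lemma blockEquiv_mem_Bblk (k : (i : Fin m) × Fin (J i)) (i : Fin m) :
    blockEquiv J k ∈ Bblk J i ↔ k.1 = i := by
  obtain ⟨i', t⟩ := k
  rw [mem_Bblk, val_blockEquiv]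
  have ht := t.isLt
  rcases lt_trichotomy i' i with h | rfl | h
  · have := sum_Iio_add_le_sum_Iio J h
    simp only [h.ne, iff_false]
    omega
  · simp only [iff_true]
    omega
  · have := sum_Iio_add_le_sum_Iio J h
    simp only [h.ne', iff_false]
    omega

lemma Bblk_subset_iff (i : Fin m) (σ : Finset (Fin (dJ J))) :
    Bblk J i ⊆ σ ↔ ∀ t, blockEquiv J ⟨i, t⟩ ∈ σ := by
  refine ⟨fun h t => h ((blockEquiv_mem_Bblk J _ i).2 rfl), fun h r hr => ?_⟩
  obtain ⟨⟨i', t⟩, rfl⟩ := (blockEquiv J).surjective r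
  obtain rfl : i' = i := (blockEquiv_mem_Bblk J _ i).1 hr
  exact h t

noncomputable def blockHomeomorph : (Π i, EuclideanSpace ℝ (Fin (J i))) ≃ₜ (Fin (dJ J) → ℝ) :=
  (Homeomorph.piCongrRight fun i => (EuclideanSpace.equiv (Fin (J i)) ℝ).radialHomeomorph).trans
    ((Homeomorph.piSigmaCurry ℝ).symm.trans
      (Homeomorph.piCongrLeft (Y := fun _ => ℝ) (blockEquiv J)))

lemma blockHomeomorph_apply_blockEquiv (x : Π i, EuclideanSpace ℝ (Fin (J i)))
    (k : (i : Fin m) × Fin (J i)) :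
    blockHomeomorph J x (blockEquiv J k) =
      radial (EuclideanSpace.equiv (Fin (J k.1)) ℝ) (x k.1) k.2 := by
  simp only [blockHomeomorph, Homeomorph.trans_apply, Homeomorph.piCongrLeft_apply_apply]
  rfl

end Blocks

section Faces

variable (K : ASC m)

lemma exists_isMissingFace_subset {T : Finset (Fin m)} (hT : T ∉ K.faces) :
    ∃ τ ⊆ T, IsMissingFace K τ := by
  induction T using Finset.strongInduction with
  | H T ih =>
    by_cases h : ∀ s ⊂ T, s ∈ K.faces
    · exact ⟨T, subset_rfl, hT, h⟩
    · push Not at h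
      obtain ⟨s, hsT, hs⟩ := h
      obtain ⟨τ, hτs, hτ⟩ := ih s hsT hs
      exact ⟨τ, hτs.trans hsT.subset, hτ⟩

lemma mem_faces_iff_forall_isMissingFace (T : Finset (Fin m)) :
    T ∈ K.faces ↔ ∀ τ, IsMissingFace K τ → ¬ τ ⊆ T := by
  refine ⟨fun hT τ hτ hτT => hτ.1 (K.down_closed hT hτT), fun h => ?_⟩
  by_contra hT
  obtain ⟨τ, hτT, hτ⟩ := exists_isMissingFace_subset K hT
  exact h τ hτ hτT

lemma mem_KJfaces_iff (J : Fin m → ℕ) {σ : Finset (Fin (dJ J))} {T : Finset (Fin m)}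
    (hT : ∀ i, i ∈ T ↔ Bblk J i ⊆ σ) : σ ∈ KJfaces K J ↔ T ∈ K.faces := by
  have hbiUnion (τ : Finset (Fin m)) : τ.biUnion (Bblk J) ⊆ σ ↔ τ ⊆ T := by
    simp only [biUnion_subset, subset_iff (s₁ := τ), hT]
  simp only [KJfaces, Set.mem_ofPred_eq, hbiUnion, mem_faces_iff_forall_isMissingFace]

lemma mem_PolyProdDS_iff (J : Fin m → ℕ) (x : Π i, EuclideanSpace ℝ (Fin (J i))) :
    x ∈ PolyProdDS K J ↔ blockHomeomorph J x ∈ RMAC (KJfaces K J) := by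
  have hcoord (i : Fin m) (t : Fin (J i)) : |blockHomeomorph J x (blockEquiv J ⟨i, t⟩)| =
      ‖radial (EuclideanSpace.equiv (Fin (J i)) ℝ) (x i) t‖ := by
    rw [blockHomeomorph_apply_blockEquiv J x ⟨i, t⟩, Real.norm_eq_abs]
  have hle : (∀ r, |blockHomeomorph J x r| ≤ 1) ↔ ∀ i, ‖x i‖ ≤ 1 := by
    simp only [← (blockEquiv J).forall_congr_right, Sigma.forall, hcoord,
      ← norm_radial (EuclideanSpace.equiv _ ℝ) (x _), pi_norm_le_iff_of_nonneg zero_le_one]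
  have hlt (i : Fin m) :
      Bblk J i ⊆ univ.filter (fun r => |blockHomeomorph J x r| < 1) ↔ ‖x i‖ < 1 := by
    simp only [Bblk_subset_iff, mem_filter, mem_univ, true_and, hcoord,
      ← norm_radial (EuclideanSpace.equiv _ ℝ) (x i), pi_norm_lt_iff zero_lt_one]
  simp only [PolyProdDS, RMAC, Set.mem_ofPred_eq, hle]
  rw [mem_KJfaces_iff K J (T := univ.filter fun i => ‖x i‖ < 1) (by simp [hlt])]

end Faces

theorem stmt0_general (K : ASC m) (J : Fin m → ℕ) :
    Nonempty (↥(PolyProdDS K J) ≃ₜ ↥(RMAC (KJfaces K J))) :=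
  ⟨(blockHomeomorph J).subtype (mem_PolyProdDS_iff K J)⟩

theorem stmt0 (K : ASC m) (J : Fin m → ℕ) (hJ : ∀ i, 1 ≤ J i) :
    Nonempty (↥(PolyProdDS K J) ≃ₜ ↥(RMAC (KJfaces K J))) :=
  stmt0_general K J
end

section
/- Let K be an abstract simplicial complex on [m] and J = (j_1,…,j_m) an m-tuple of positive integers. For σ ⊆ ω ⊆ [m] define (σ,ω)_J = Σ_{k∈ω} (j_k−1)·card{i ∈ σ : i > k} + Σ_{k∈ω} (j_k−1)·Σ_{r∈ω, r>k} (j_r−1), taken mod 2. Then the ℤ-linear map η_J : ⊕_{ω⊆[m]} C̃^*(K_ω) → R*_K(J) sending the dual simplex σ*_ω ∈ C̃^*(K_ω) to (−1)^{(σ,ω)_J} ṽ^σ ũ^{ω∖σ} commutes with the differentials (η_J ∘ d = d ∘ η_J) and induces an isomorphism of (ungraded) ℤ-modules ⊕_{ω⊆[m]} H̃^*(K_ω) ≅ H*(R*_K(J)). -/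
set_option synthInstance.maxHeartbeats 1000000
set_option maxHeartbeats 1000000

def csg {m : ℕ} (i : Fin m) (σ : Finset (Fin m)) : ℤ :=
  (-1) ^ (σ.filter (fun j => j < i)).card

variable {n : ℕ}

/-- index of the square-free monomials `ṽ^σ ũ^τ`. -/
def MonIdx (F : Set (Finset (Fin n))) : Type :=
  {p : Finset (Fin n) × Finset (Fin n) // p.1 ∈ F ∧ Disjoint p.1 p.2}

/-- the free `ℤ`-module on the square-free monomials: the underlying module of `R*_K(J)`. -/
abbrev RMod (F : Set (Finset (Fin n))) : Type := MonIdx F →₀ ℤ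

open Classical in
/-- the differential of `R*_K(J)`, determined by `dũ^i = ṽ^i`, `dṽ^i = 0` and the
graded Leibniz rule:
`d(ṽ^σ ũ^τ) = ∑_{i∈τ, σ∪{i}∈K} (-1)^{∑_{k∈σ,k<i} j_k + ∑_{k∈τ,k<i}(j_k-1)} ṽ^{σ∪{i}} ũ^{τ∖{i}}`. -/
noncomputable def dR (F : Set (Finset (Fin n))) (J : Fin n → ℕ) :
    RMod F →ₗ[ℤ] RMod F :=
  Finsupp.lift (RMod F) ℤ (MonIdx F) fun b =>
    ∑ i ∈ b.1.2,
      if h : insert i b.1.1 ∈ F then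
        ((-1 : ℤ) ^ (∑ k ∈ b.1.1.filter (fun k => k < i), J k +
            ∑ k ∈ b.1.2.filter (fun k => k < i), (J k - 1))) •
          Finsupp.single (⟨(insert i b.1.1, b.1.2.erase i),
            ⟨h, by
              refine Finset.disjoint_left.2 fun a ha hb => ?_
              rcases Finset.mem_insert.1 ha with h' | h'
              · exact (Finset.mem_erase.1 hb).1 h'
              · exact (Finset.disjoint_left.1 b.2.2 h') (Finset.mem_of_mem_erase hb)⟩⟩ :
              MonIdx F) (1 : ℤ)
      else 0

/-- index of basis of `⊕_ω C̃^*(K_ω)` : pairs `(ω, σ)` with `σ ∈ K_ω`. -/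
def PairIdx (K : ASC n) : Type :=
  {p : Finset (Fin n) × Finset (Fin n) // p.2 ⊆ p.1 ∧ p.2 ∈ K.faces}

abbrev PairCochain (K : ASC n) : Type := PairIdx K →₀ ℤ

open Classical in
/-- coboundary of `⊕_ω C̃^*(K_ω)` :
`d(σ*_ω) = ∑_{i ∈ ω∖σ, σ∪{i} ∈ K} (-1)^{(i,σ)} (σ∪{i})*_ω`. -/
noncomputable def Paircob (K : ASC n) : PairCochain K →ₗ[ℤ] PairCochain K :=
  Finsupp.lift (PairCochain K) ℤ (PairIdx K) fun b =>
    ∑ i ∈ (b.1.1 \ b.1.2).attach,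
      if h : insert i.1 b.1.2 ∈ K.faces then
        csg i.1 b.1.2 •
          Finsupp.single (⟨(b.1.1, insert i.1 b.1.2),
            ⟨Finset.insert_subset (Finset.mem_sdiff.1 i.2).1 b.2.1, h⟩⟩ :
            PairIdx K) (1 : ℤ)
      else 0

/-- the sign `(σ,ω)_J = ∑_{k∈ω}(j_k-1)·card{i∈σ : i>k} + ∑_{k∈ω}(j_k-1)·∑_{r∈ω,r>k}(j_r-1)`. -/
def soJ (J : Fin n → ℕ) (σ ω : Finset (Fin n)) : ℕ :=
  ∑ k ∈ ω, (J k - 1) * (σ.filter (fun i => k < i)).card +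
    ∑ k ∈ ω, (J k - 1) * ∑ r ∈ ω.filter (fun r => k < r), (J r - 1)

/-- the map `η_J`, sending `σ*_ω` to `(-1)^{(σ,ω)_J} ṽ^σ ũ^{ω∖σ}`. -/
noncomputable def etaJ (K : ASC n) (J : Fin n → ℕ) :
    PairCochain K →ₗ[ℤ] RMod K.faces :=
  Finsupp.lift (RMod K.faces) ℤ (PairIdx K) fun b =>
    ((-1 : ℤ) ^ soJ J b.1.2 b.1.1) •
      Finsupp.single (⟨(b.1.2, b.1.1 \ b.1.2),
        ⟨b.2.2, Finset.disjoint_sdiff⟩⟩ : MonIdx K.faces) (1 : ℤ)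

/-!
`η_J` sends the basis element `σ*_ω` to `±ṽ^σ ũ^{ω∖σ}`, and `(ω, σ) ↦ (σ, ω∖σ)` is a bijection
onto the square-free monomials, so `η_J` is an isomorphism of free `ℤ`-modules. On `σ*_ω` both
`η_J ∘ d` and `d ∘ η_J` are sums over the vertices `i ∈ ω∖σ` with `σ ∪ {i} ∈ K`; adding `i` to `σ`
changes `(σ,ω)_J` by `∑_{k∈ω, k<i} (j_k - 1)`, which is exactly the discrepancy between the
simplicial sign `(-1)^{(i,σ)}` and the Koszul sign of `d ũ^i`. A cochain isomorphism induces an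
isomorphism in cohomology.
-/

open Finset

theorem Finsupp.lift_single_one {R M X : Type*} [Semiring R] [AddCommMonoid M] [Module R M]
    (f : X → M) (x : X) : Finsupp.lift M R X f (Finsupp.single x 1) = f x := by
  simp

section CochainIso

variable {R M N : Type*} [Semiring R] [AddCommMonoid M] [Module R M] [AddCommMonoid N]
  [Module R N] {f : M →ₗ[R] N} {dM : M →ₗ[R] M} {dN : N →ₗ[R] N}

theorem exists_eq_of_exists_map_eq (hf : Function.Bijective f)
    (hcomm : ∀ x, f (dM x) = dN (f x)) {x : M} (h : ∃ z, f x = dN z) : ∃ w, x = dM w := by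
  obtain ⟨z, hz⟩ := h
  obtain ⟨w, rfl⟩ := hf.2 z
  exact ⟨w, hf.1 (by rw [hz, hcomm])⟩

theorem exists_cocycle_map_eq (hf : Function.Bijective f) (hcomm : ∀ x, f (dM x) = dN (f x))
    {y : N} (hy : dN y = 0) : ∃ x, dM x = 0 ∧ f x = y := by
  obtain ⟨x, rfl⟩ := hf.2 y
  exact ⟨x, hf.1 (by rw [hcomm, hy, map_zero]), rfl⟩

end CochainIso

variable {K : ASC n}

/- `PairIdx` and `MonIdx` are not reducible, so an anonymous constructor elaborates to a term of
the underlying subtype, on which `rw` fails; these constructors carry the right type. -/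
def pairIdx (ω σ : Finset (Fin n)) (h : σ ⊆ ω ∧ σ ∈ K.faces) : PairIdx K := ⟨(ω, σ), h⟩

theorem exists_eq_pairIdx (b : PairIdx K) : ∃ ω σ h, b = pairIdx ω σ h :=
  ⟨_, _, b.2, rfl⟩

def monIdx {F : Set (Finset (Fin n))} (σ τ : Finset (Fin n)) (h : σ ∈ F ∧ Disjoint σ τ) :
    MonIdx F := ⟨(σ, τ), h⟩

def pairMonEquiv (K : ASC n) : PairIdx K ≃ MonIdx K.faces where
  toFun b := ⟨(b.1.2, b.1.1 \ b.1.2), b.2.2, disjoint_sdiff⟩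
  invFun c := ⟨(c.1.1 ∪ c.1.2, c.1.1), subset_union_left, c.2.1⟩
  left_inv b := Subtype.ext (Prod.ext (union_sdiff_of_subset b.2.1) rfl)
  right_inv c := Subtype.ext (Prod.ext rfl (union_sdiff_cancel_left c.2.2))

theorem etaJ_single (J : Fin n → ℕ) (ω σ : Finset (Fin n)) (h : σ ⊆ ω ∧ σ ∈ K.faces) :
    etaJ K J (Finsupp.single (pairIdx ω σ h) 1) =
      (-1) ^ soJ J σ ω • Finsupp.single (monIdx σ (ω \ σ) ⟨h.2, disjoint_sdiff⟩) 1 :=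
  Finsupp.lift_single_one _ _

open Classical in
theorem Paircob_single (ω σ : Finset (Fin n)) (h : σ ⊆ ω ∧ σ ∈ K.faces) :
    Paircob K (Finsupp.single (pairIdx ω σ h) 1) =
      ∑ i ∈ (ω \ σ).attach,
        if hi : insert i.1 σ ∈ K.faces then
          csg i.1 σ • Finsupp.single (pairIdx ω (insert i.1 σ)
            ⟨insert_subset (mem_sdiff.1 i.2).1 h.1, hi⟩) 1
        else 0 :=
  Finsupp.lift_single_one _ _

open Classical in
theorem dR_single (F : Set (Finset (Fin n))) (J : Fin n → ℕ) (σ τ : Finset (Fin n))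
    (h : σ ∈ F ∧ Disjoint σ τ) :
    dR F J (Finsupp.single (monIdx σ τ h) 1) =
      ∑ i ∈ τ,
        if hi : insert i σ ∈ F then
          (-1) ^ (∑ k ∈ σ.filter (fun k => k < i), J k +
              ∑ k ∈ τ.filter (fun k => k < i), (J k - 1)) •
            Finsupp.single (monIdx (insert i σ) (τ.erase i)
              ⟨hi, by grind [Finset.disjoint_left]⟩) 1
        else 0 :=
  Finsupp.lift_single_one _ _

noncomputable def etaBasis (K : ASC n) (J : Fin n → ℕ) :
    Module.Basis (PairIdx K) ℤ (RMod K.faces) :=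
  (Finsupp.basisSingleOne.reindex (pairMonEquiv K).symm).unitsSMul
    fun b => (-1) ^ soJ J b.1.2 b.1.1

theorem etaJ_eq_linearCombination (J : Fin n → ℕ) :
    etaJ K J = Finsupp.linearCombination ℤ (etaBasis K J) := by
  refine Finsupp.basisSingleOne.ext fun b => ?_
  obtain ⟨ω, σ, h, rfl⟩ := exists_eq_pairIdx b
  rw [Finsupp.coe_basisSingleOne, etaJ_single, Finsupp.linearCombination_single, one_smul,
    etaBasis, Module.Basis.unitsSMul_apply, Module.Basis.reindex_apply, Equiv.symm_symm,
    Finsupp.coe_basisSingleOne, Units.smul_def]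
  push_cast
  rfl

theorem etaJ_bijective (J : Fin n → ℕ) : Function.Bijective (etaJ K J) := by
  rw [etaJ_eq_linearCombination, ← Module.Basis.coe_repr_symm]
  exact (etaBasis K J).repr.symm.bijective

theorem card_filter_lt_insert {σ : Finset (Fin n)} {i : Fin n} (hi : i ∉ σ) (k : Fin n) :
    #((insert i σ).filter (fun j => k < j)) =
      #(σ.filter (fun j => k < j)) + if k < i then 1 else 0 := by
  rw [filter_insert]
  split_ifs
  · rw [card_insert_of_notMem (fun h => hi (mem_filter.1 h).1)]
  · rfl

theorem soJ_insert (J : Fin n → ℕ) (σ ω : Finset (Fin n)) {i : Fin n} (hi : i ∉ σ) :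
    soJ J (insert i σ) ω = soJ J σ ω + ∑ k ∈ ω.filter (fun k => k < i), (J k - 1) := by
  simp only [soJ, card_filter_lt_insert hi, mul_add, sum_add_distrib, mul_ite, mul_one, mul_zero,
    ← sum_filter]
  ring

theorem csg_mul_negOnePow_soJ_insert (J : Fin n → ℕ) (hJ : ∀ i, 1 ≤ J i) {σ ω : Finset (Fin n)}
    (hσω : σ ⊆ ω) {i : Fin n} (hi : i ∉ σ) :
    csg i σ * (-1) ^ soJ J (insert i σ) ω = (-1) ^ soJ J σ ω *
      (-1) ^ (∑ k ∈ σ.filter (fun k => k < i), J k +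
        ∑ k ∈ (ω \ σ).filter (fun k => k < i), (J k - 1)) := by
  have hω : ∑ k ∈ ω.filter (fun k => k < i), (J k - 1) =
      ∑ k ∈ σ.filter (fun k => k < i), (J k - 1) +
        ∑ k ∈ (ω \ σ).filter (fun k => k < i), (J k - 1) := by
    rw [← sum_union (disjoint_filter_filter disjoint_sdiff), ← filter_union,
      union_sdiff_of_subset hσω]
  have hσ : #(σ.filter (fun j => j < i)) + ∑ k ∈ σ.filter (fun k => k < i), (J k - 1) =
      ∑ k ∈ σ.filter (fun k => k < i), J k := by
    rw [card_eq_sum_ones, ← sum_add_distrib]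
    exact sum_congr rfl fun k _ => by have := hJ k; omega
  rw [csg, soJ_insert J σ ω hi, ← pow_add, ← pow_add, hω, ← hσ]
  ring

theorem etaJ_Paircob_single (J : Fin n → ℕ) (hJ : ∀ i, 1 ≤ J i) (ω σ : Finset (Fin n))
    (h : σ ⊆ ω ∧ σ ∈ K.faces) :
    etaJ K J (Paircob K (Finsupp.single (pairIdx ω σ h) 1)) =
      dR K.faces J (etaJ K J (Finsupp.single (pairIdx ω σ h) 1)) := by
  rw [Paircob_single, etaJ_single, map_sum, map_smul, dR_single, ← sum_attach (ω \ σ), smul_sum]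
  refine sum_congr rfl fun i _ => ?_
  by_cases hi : insert i.1 σ ∈ K.faces
  · rw [dif_pos hi, dif_pos hi, map_smul, etaJ_single, smul_smul, smul_smul,
      csg_mul_negOnePow_soJ_insert J hJ h.1 (mem_sdiff.1 i.2).2]
    simp only [sdiff_insert]
  · rw [dif_neg hi, dif_neg hi, map_zero, smul_zero]

theorem etaJ_Paircob (J : Fin n → ℕ) (hJ : ∀ i, 1 ≤ J i) (x : PairCochain K) :
    etaJ K J (Paircob K x) = dR K.faces J (etaJ K J x) := by
  have h : (etaJ K J).comp (Paircob K) = (dR K.faces J).comp (etaJ K J) := by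
    refine Finsupp.basisSingleOne.ext fun b => ?_
    obtain ⟨ω, σ, h, rfl⟩ := exists_eq_pairIdx b
    exact etaJ_Paircob_single J hJ ω σ h
  exact LinearMap.congr_fun h x

/-- `η_J` is a cochain map and induces an isomorphism
`⊕_ω H̃^*(K_ω) ≅ H^*(R*_K(J))` of (ungraded) `ℤ`-modules. -/
theorem stmt2 (K : ASC n) (J : Fin n → ℕ) (hJ : ∀ i, 1 ≤ J i) :
    (∀ x : PairCochain K, etaJ K J (Paircob K x) = dR K.faces J (etaJ K J x)) ∧
    (∀ x : PairCochain K, Paircob K x = 0 →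
      (∃ z, etaJ K J x = dR K.faces J z) → ∃ w, x = Paircob K w) ∧
    (∀ y : RMod K.faces, dR K.faces J y = 0 →
      ∃ x : PairCochain K, Paircob K x = 0 ∧ ∃ z, y - etaJ K J x = dR K.faces J z) := by
  have hcomm := etaJ_Paircob (K := K) J hJ
  refine ⟨hcomm, fun x _ hx => exists_eq_of_exists_map_eq (etaJ_bijective J) hcomm hx,
    fun y hy => ?_⟩
  obtain ⟨x, hx, rfl⟩ := exists_cocycle_map_eq (etaJ_bijective J) hcomm hy
  exact ⟨x, hx, 0, by rw [sub_self, map_zero]⟩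
end

section
/- Let K be an abstract simplicial complex on [m]. For every integer p ≥ 0 there is an isomorphism of abelian groups H_p(C_*((D^1,S^0)^K)) ≅ ⊕_{ω⊆[m]} H̃_{p−1}(K_ω), where the sum is over all subsets ω of [m]. -/
set_option synthInstance.maxHeartbeats 1000000
set_option maxHeartbeats 1000000

variable {m : ℕ}

open Classical in
noncomputable def partSub {ι α : Type*} (f : ι → α) (a : α) : Submodule ℤ (ι →₀ ℤ) where
  carrier := {x | ∀ b ∈ x.support, f b = a}
  add_mem' := by
    intro x y hx hy b hb
    rcases Finset.mem_union.1 (Finsupp.support_add hb) with h | h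
    · exact hx b h
    · exact hy b h
  zero_mem' := by intro b hb; simp at hb
  smul_mem' := by
    intro c x hx b hb
    exact hx b (Finsupp.support_smul hb)

noncomputable def cyclesAt {ι : Type*} (d : (ι →₀ ℤ) →ₗ[ℤ] (ι →₀ ℤ)) (deg : ι → ℤ)
    (p : ℤ) : Submodule ℤ (ι →₀ ℤ) :=
  LinearMap.ker d ⊓ partSub deg p

/-- homology in degree `p` of a complex given by an endomorphism `d`
(lowering the grading `deg` by one): cycles of degree `p` modulo boundaries
of chains of degree `p+1`. -/
noncomputable abbrev homAt {ι : Type*} (d : (ι →₀ ℤ) →ₗ[ℤ] (ι →₀ ℤ)) (deg : ι → ℤ)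
    (p : ℤ) : Type _ :=
  (cyclesAt d deg p) ⧸
    (Submodule.comap (cyclesAt d deg p).subtype (Submodule.map d (partSub deg (p + 1))))

/-- Index of the cellular basis words `u_σ ε_τ`. -/
def DSIdx (K : ASC m) : Type :=
  {p : Finset (Fin m) × Finset (Fin m) // p.1 ∈ K.faces ∧ Disjoint p.1 p.2}

abbrev DSChain (K : ASC m) : Type := DSIdx K →₀ ℤ

/-- the boundary `∂(u_σ ε_τ) = ∑_{i ∈ σ} (-1)^{(i,σ)} u_{σ∖i} ε_{τ∪i}` -/
noncomputable def DSbnd (K : ASC m) : DSChain K →ₗ[ℤ] DSChain K :=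
  Finsupp.lift (DSChain K) ℤ (DSIdx K) fun b =>
    ∑ i ∈ b.1.1, csg i b.1.1 •
      Finsupp.single (⟨(b.1.1.erase i, insert i b.1.2),
        ⟨K.down_closed b.2.1 (Finset.erase_subset _ _), by
          refine Finset.disjoint_left.2 fun a ha hb => ?_
          rcases Finset.mem_insert.1 hb with h | h
          · exact (Finset.mem_erase.1 ha).1 h
          · exact (Finset.disjoint_left.1 b.2.2 (Finset.mem_of_mem_erase ha)) h⟩⟩ : DSIdx K)
        (1 : ℤ)

def DSdeg {K : ASC m} (b : DSIdx K) : ℤ := b.1.1.card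

/-- basis of the augmented simplicial chain complex of the full subcomplex `K_ω` -/
def AugIdx (K : ASC m) (ω : Finset (Fin m)) : Type :=
  {σ : Finset (Fin m) // σ ∈ K.faces ∧ σ ⊆ ω}

abbrev AugChain (K : ASC m) (ω : Finset (Fin m)) : Type := AugIdx K ω →₀ ℤ

/-- the boundary `∂σ = ∑_{i ∈ σ} (-1)^{(i,σ)} (σ∖{i})` of the augmented chain complex -/
noncomputable def Augbnd (K : ASC m) (ω : Finset (Fin m)) :
    AugChain K ω →ₗ[ℤ] AugChain K ω :=
  Finsupp.lift (AugChain K ω) ℤ (AugIdx K ω) fun b =>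
    ∑ i ∈ b.1, csg i b.1 •
      Finsupp.single (⟨b.1.erase i,
        ⟨K.down_closed b.2.1 (Finset.erase_subset _ _),
         (Finset.erase_subset _ _).trans b.2.2⟩⟩ : AugIdx K ω) (1 : ℤ)

/-- degree of a simplex in the augmented chain complex is `card σ - 1`. -/
def Augdeg {K : ASC m} {ω : Finset (Fin m)} (b : AugIdx K ω) : ℤ := (b.1.card : ℤ) - 1

/-- reduced simplicial homology of the full subcomplex `K_ω` -/
noncomputable abbrev AugH (K : ASC m) (ω : Finset (Fin m)) (p : ℤ) : Type _ :=
  homAt (Augbnd K ω) Augdeg p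

/-!
The word `u_σ ε_τ` corresponds to the simplex `σ` of the full subcomplex `K_{σ ∪ τ}`. The
boundary only moves vertices from `σ` to `τ`, so it preserves `ω = σ ∪ τ`, and under this
correspondence it is the simplicial boundary of `K_ω`. Hence `C_*((D^1,S^0)^K)` is the direct sum
over `ω ⊆ [m]` of the complexes `C̃_*(K_ω)` with degrees shifted up by one, and homology commutes
with finite direct sums.
-/
section Subquotient

variable {R : Type*} [Ring R] {M N : Type*} [AddCommGroup M] [Module R M]
  [AddCommGroup N] [Module R N]

def subquotientEquivOfMapEq (E : M ≃ₗ[R] N) {Z B : Submodule R M} {Z' B' : Submodule R N}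
    (hZ : Z.map E.toLinearMap = Z') (hB : B.map E.toLinearMap = B') :
    (Z ⧸ B.comap Z.subtype) ≃ₗ[R] (Z' ⧸ B'.comap Z'.subtype) :=
  Submodule.Quotient.equiv _ _ ((E.submoduleMap Z).trans (LinearEquiv.ofEq _ _ hZ)) <| by
    subst hZ hB
    ext ⟨y, x, hx, rfl⟩
    simp

variable {ι : Type*} {Ms : ι → Type*} [∀ i, AddCommGroup (Ms i)] [∀ i, Module R (Ms i)]

def submodulePiEquiv (Z : ∀ i, Submodule R (Ms i)) :
    Submodule.pi Set.univ Z ≃ₗ[R] Π i, Z i where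
  toFun x i := ⟨x.1 i, x.2 i (Set.mem_univ i)⟩
  invFun y := ⟨fun i => y i, fun i _ => (y i).2⟩
  map_add' _ _ := rfl
  map_smul' _ _ := rfl
  left_inv _ := rfl
  right_inv _ := rfl

end Subquotient

section SubquotientPi

variable {R : Type*} [CommRing R] {ι : Type*} [Fintype ι] [DecidableEq ι]
  {Ms : ι → Type*} [∀ i, AddCommGroup (Ms i)] [∀ i, Module R (Ms i)]

def subquotientPiEquiv (Z B : ∀ i, Submodule R (Ms i)) :
    (Submodule.pi Set.univ Z ⧸
        (Submodule.pi Set.univ B).comap (Submodule.pi Set.univ Z).subtype) ≃ₗ[R]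
      Π i, (Z i ⧸ (B i).comap (Z i).subtype) :=
  (Submodule.Quotient.equiv _ _ (submodulePiEquiv Z) <| by
    ext y
    simp only [Submodule.mem_map_equiv, Submodule.mem_comap, Submodule.subtype_apply,
      Submodule.mem_pi, Set.mem_univ, forall_const]
    exact Iff.rfl).trans (Submodule.quotientPi _)

end SubquotientPi

section Homology

variable {ι κ : Type*} {η : κ → Type*}

lemma mem_partSub {α : Type*} {f : ι → α} {a : α} {x : ι →₀ ℤ} :
    x ∈ partSub f a ↔ ∀ b, x b ≠ 0 → f b = a := by
  simp [partSub]

variable (E : (ι →₀ ℤ) ≃ₗ[ℤ] Π k, η k →₀ ℤ) {d : (ι →₀ ℤ) →ₗ[ℤ] (ι →₀ ℤ)}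
  {d' : ∀ k, (η k →₀ ℤ) →ₗ[ℤ] (η k →₀ ℤ)}

lemma map_ker_eq_pi (hd : ∀ x, E (d x) = LinearMap.piMap d' (E x)) :
    (LinearMap.ker d).map E.toLinearMap =
      Submodule.pi Set.univ fun k => LinearMap.ker (d' k) := by
  ext y
  obtain ⟨x, rfl⟩ := E.surjective y
  rw [Submodule.mem_map_equiv, LinearEquiv.symm_apply_apply, LinearMap.mem_ker,
    ← E.map_eq_zero_iff, hd]
  simp [funext_iff]

lemma map_map_eq_pi (hd : ∀ x, E (d x) = LinearMap.piMap d' (E x))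
    {Q : Submodule ℤ (ι →₀ ℤ)} {Q' : ∀ k, Submodule ℤ (η k →₀ ℤ)}
    (hQ : Q.map E.toLinearMap = Submodule.pi Set.univ Q') :
    (Q.map d).map E.toLinearMap =
      Submodule.pi Set.univ fun k => (Q' k).map (d' k) := by
  ext y
  simp only [Submodule.mem_pi, Set.mem_univ, forall_const, Submodule.mem_map]
  constructor
  · rintro ⟨_, ⟨x, hx, rfl⟩, rfl⟩ k
    have hEx : E x ∈ Submodule.pi Set.univ Q' := hQ ▸ Submodule.mem_map_of_mem hx
    exact ⟨E x k, hEx k (Set.mem_univ k), by simp [hd]⟩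
  · intro hy
    choose z hz hdz using hy
    obtain ⟨x, hx, hxz⟩ : z ∈ Q.map E.toLinearMap := hQ ▸ fun k _ => hz k
    refine ⟨d x, ⟨x, hx, rfl⟩, ?_⟩
    simp only [LinearEquiv.coe_coe] at hxz ⊢
    rw [hd, hxz]
    exact funext hdz

variable {deg : ι → ℤ} {deg' : ∀ k, η k → ℤ} {p p' : ℤ}

lemma map_cyclesAt_eq_pi (hd : ∀ x, E (d x) = LinearMap.piMap d' (E x))
    (hdeg : (partSub deg p).map E.toLinearMap =
      Submodule.pi Set.univ fun k => partSub (deg' k) p') :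
    (cyclesAt d deg p).map E.toLinearMap =
      Submodule.pi Set.univ fun k => cyclesAt (d' k) (deg' k) p' := by
  rw [cyclesAt, Submodule.map_inf _ E.injective, map_ker_eq_pi E hd, hdeg]
  ext
  simp [cyclesAt, forall_and]

noncomputable def homAtEquivPi [Fintype κ] [DecidableEq κ]
    (hd : ∀ x, E (d x) = LinearMap.piMap d' (E x))
    (hp : (partSub deg p).map E.toLinearMap =
      Submodule.pi Set.univ fun k => partSub (deg' k) p')
    (hp1 : (partSub deg (p + 1)).map E.toLinearMap =
      Submodule.pi Set.univ fun k => partSub (deg' k) (p' + 1)) :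
    homAt d deg p ≃+ Π k, homAt (d' k) (deg' k) p' :=
  ((subquotientEquivOfMapEq E (map_cyclesAt_eq_pi E hd hp) (map_map_eq_pi E hd hp1)).trans
    (subquotientPiEquiv _ _)).toAddEquiv

end Homology

section Sigma

variable {κ : Type*} {η : κ → Type*}

noncomputable def sigmaBnd (d : ∀ k, (η k →₀ ℤ) →ₗ[ℤ] (η k →₀ ℤ)) :
    ((Σ k, η k) →₀ ℤ) →ₗ[ℤ] ((Σ k, η k) →₀ ℤ) :=
  Finsupp.lift _ ℤ _ fun b => (d b.1 (Finsupp.single b.2 1)).mapDomain (Sigma.mk b.1)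

lemma sigmaBnd_single (d : ∀ k, (η k →₀ ℤ) →ₗ[ℤ] (η k →₀ ℤ)) (b : Σ k, η k) :
    sigmaBnd d (Finsupp.single b 1) =
      (d b.1 (Finsupp.single b.2 1)).mapDomain (Sigma.mk b.1) := by
  simp [sigmaBnd]

variable [Fintype κ]

lemma sigmaFinsuppLEquivPiFinsupp_mapDomain_mk {R M : Type*} [Semiring R] [AddCommMonoid M]
    [Module R M] [DecidableEq κ] (k : κ) (v : η k →₀ M) :
    Finsupp.sigmaFinsuppLEquivPiFinsupp R (v.mapDomain (Sigma.mk k)) = Pi.single k v := by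
  ext k' j
  rw [Finsupp.sigmaFinsuppLEquivPiFinsupp_apply]
  by_cases h : k' = k
  · subst h
    simp [Finsupp.mapDomain_apply sigma_mk_injective]
  · rw [Pi.single_eq_of_ne h, Finsupp.mapDomain_of_notMem_range]
    · rfl
    · rintro ⟨_, he⟩
      exact h (congrArg Sigma.fst he).symm

lemma sigmaFinsuppLEquivPiFinsupp_sigmaBnd (d : ∀ k, (η k →₀ ℤ) →ₗ[ℤ] (η k →₀ ℤ))
    (x : (Σ k, η k) →₀ ℤ) :
    Finsupp.sigmaFinsuppLEquivPiFinsupp ℤ (sigmaBnd d x) =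
      LinearMap.piMap d (Finsupp.sigmaFinsuppLEquivPiFinsupp ℤ x) := by
  classical
  suffices (Finsupp.sigmaFinsuppLEquivPiFinsupp ℤ).toLinearMap ∘ₗ sigmaBnd d =
      LinearMap.piMap d ∘ₗ (Finsupp.sigmaFinsuppLEquivPiFinsupp ℤ).toLinearMap from
    LinearMap.congr_fun this x
  refine Finsupp.lhom_ext' fun b => LinearMap.ext_ring ?_
  have hsingle :=
    sigmaFinsuppLEquivPiFinsupp_mapDomain_mk (R := ℤ) b.1 (Finsupp.single b.2 (1 : ℤ))
  rw [Finsupp.mapDomain_single] at hsingle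
  simp only [LinearMap.comp_apply, Finsupp.lsingle_apply, LinearEquiv.coe_coe, sigmaBnd_single,
    sigmaFinsuppLEquivPiFinsupp_mapDomain_mk, hsingle]
  exact Pi.single_op (fun k => d k) (fun k => map_zero (d k)) b.1 _

lemma map_partSub_sigmaFinsuppLEquivPiFinsupp (deg : ∀ k, η k → ℤ) (a : ℤ) :
    (partSub (fun b : Σ k, η k => deg b.1 b.2) a).map
        (Finsupp.sigmaFinsuppLEquivPiFinsupp ℤ (M := ℤ) (ιs := η)).toLinearMap =
      Submodule.pi Set.univ fun k => partSub (deg k) a := by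
  ext y
  simp [Submodule.mem_map_equiv, mem_partSub, Sigma.forall]

end Sigma

lemma map_partSub_domLCongr {ι κ : Type*} (e : ι ≃ κ) {deg : ι → ℤ} {deg' : κ → ℤ} {a a' : ℤ}
    (h : ∀ i, deg' (e i) = a' ↔ deg i = a) :
    (partSub deg a).map (Finsupp.domLCongr (R := ℤ) (M := ℤ) e).toLinearMap =
      partSub deg' a' := by
  ext y
  simp only [Submodule.mem_map_equiv, mem_partSub, Finsupp.domLCongr_symm,
    Finsupp.domLCongr_apply, Finsupp.domCongr_apply, Finsupp.equivMapDomain_apply, Equiv.symm_symm]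
  rw [← e.forall_congr_right]
  simp only [← h]

section Cellular

variable (K : ASC m)

lemma augIdx_sigma_ext {ω ω' : Finset (Fin m)} {σ : AugIdx K ω} {σ' : AugIdx K ω'}
    (hω : ω = ω') (hσ : σ.1 = σ'.1) : (⟨ω, σ⟩ : Σ ω, AugIdx K ω) = ⟨ω', σ'⟩ := by
  subst hω
  rw [Subtype.ext hσ]

def dsIdxEquivSigma : DSIdx K ≃ Σ ω : Finset (Fin m), AugIdx K ω where
  toFun b := ⟨b.1.1 ∪ b.1.2, b.1.1, b.2.1, Finset.subset_union_left⟩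
  invFun c := ⟨(c.2.1, c.1 \ c.2.1), c.2.2.1, Finset.disjoint_sdiff⟩
  left_inv b := Subtype.ext (Prod.ext rfl (Finset.union_sdiff_cancel_left b.2.2))
  right_inv c := augIdx_sigma_ext K (Finset.union_sdiff_of_subset c.2.2.2) rfl

lemma domLCongr_DSbnd (x : DSChain K) :
    Finsupp.domLCongr (R := ℤ) (M := ℤ) (dsIdxEquivSigma K) (DSbnd K x) =
      sigmaBnd (Augbnd K) (Finsupp.domLCongr (R := ℤ) (M := ℤ) (dsIdxEquivSigma K) x) := by
  suffices (Finsupp.domLCongr (R := ℤ) (M := ℤ) (dsIdxEquivSigma K)).toLinearMap ∘ₗ DSbnd K =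
      sigmaBnd (Augbnd K) ∘ₗ
        (Finsupp.domLCongr (R := ℤ) (M := ℤ) (dsIdxEquivSigma K)).toLinearMap from
    LinearMap.congr_fun this x
  refine Finsupp.lhom_ext' fun b => LinearMap.ext_ring ?_
  simp only [LinearMap.comp_apply, Finsupp.lsingle_apply, LinearEquiv.coe_coe,
    sigmaBnd_single, DSbnd, Augbnd, Finsupp.lift_apply, Finsupp.sum_single_index, zero_smul,
    one_smul, Finsupp.domLCongr_single]
  refine (map_sum _ _ _).trans ((Finset.sum_congr rfl fun i hi => ?_).trans
    (Finsupp.mapDomain_finsetSum ..).symm)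
  erw [map_zsmul, Finsupp.mapDomain_smul, Finsupp.domLCongr_single, Finsupp.mapDomain_single]
  congr 2
  refine augIdx_sigma_ext K ?_ rfl
  show b.1.1.erase i ∪ insert i b.1.2 = b.1.1 ∪ b.1.2
  rw [Finset.union_insert, ← Finset.insert_union, Finset.insert_erase hi]

noncomputable def dsChainEquivPi : DSChain K ≃ₗ[ℤ] Π ω : Finset (Fin m), AugChain K ω :=
  (Finsupp.domLCongr (dsIdxEquivSigma K)).trans (Finsupp.sigmaFinsuppLEquivPiFinsupp ℤ)

lemma dsChainEquivPi_DSbnd (x : DSChain K) :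
    dsChainEquivPi K (DSbnd K x) = LinearMap.piMap (Augbnd K) (dsChainEquivPi K x) := by
  rw [dsChainEquivPi, LinearEquiv.trans_apply, LinearEquiv.trans_apply, domLCongr_DSbnd,
    sigmaFinsuppLEquivPiFinsupp_sigmaBnd]

lemma map_partSub_DSdeg {a a' : ℤ} (h : a' + 1 = a) :
    (partSub DSdeg a).map (dsChainEquivPi K).toLinearMap =
      Submodule.pi Set.univ fun ω => partSub (Augdeg (K := K) (ω := ω)) a' := by
  rw [dsChainEquivPi, LinearEquiv.coe_trans, Submodule.map_comp,
    map_partSub_domLCongr (dsIdxEquivSigma K) (deg' := fun c => Augdeg c.2) (a' := a'),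
    map_partSub_sigmaFinsuppLEquivPiFinsupp]
  intro b
  change (b.1.1.card : ℤ) - 1 = a' ↔ (b.1.1.card : ℤ) = a
  omega

end Cellular

theorem stmt5 (K : ASC m) (p : ℕ) :
    Nonempty ((homAt (DSbnd K) DSdeg (p : ℤ)) ≃+
      (DirectSum (Finset (Fin m)) fun ω => AugH K ω ((p : ℤ) - 1))) :=
  ⟨(homAtEquivPi (dsChainEquivPi K) (dsChainEquivPi_DSbnd K)
      (map_partSub_DSdeg K (sub_add_cancel _ _)) (map_partSub_DSdeg K (by ring))).trans
    (DirectSum.addEquivProd _).symm⟩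
end

section
/- Let K be an abstract simplicial complex on [m], let i ∈ [m], and let J_i = (j_1,…,j_m) be the m-tuple with j_i = 2 and j_k = 1 for all k ≠ i. Then K(J_i) = K(v_i) as simplicial complexes on the vertex set [m+1]. -/
variable {m : ℕ}

/-- the relabeling `χ_i : [m] → [m+1]` fixing `j ≤ i` and shifting `j > i` up by one. -/
def chi (i : Fin m) (j : Fin m) : Fin (m + 1) :=
  if (j : ℕ) ≤ (i : ℕ) then j.castSucc else j.succ

/-- `χ_i` applied elementwise to a subset. -/
def chiF (i : Fin m) (σ : Finset (Fin m)) : Finset (Fin (m + 1)) := σ.image (chi i)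

/-- the faces of the simplicial wedge
`K(v_i) = {i} * χ_i(K_{[m]∖{i}}) ∪ {i+1} * χ_i(K_{[m]∖{i}}) ∪ {i,i+1} * χ_i(Lk(v_i,K))`. -/
def wedgeFaces (K : ASC m) (i : Fin m) : Set (Finset (Fin (m + 1))) :=
  {s | ∃ (α : Finset (Fin (m + 1))) (t : Finset (Fin m)), s = α ∪ chiF i t ∧
      ((α ⊆ {i.castSucc} ∧ t ∈ K.faces ∧ i ∉ t) ∨
       (α ⊆ {i.succ} ∧ t ∈ K.faces ∧ i ∉ t) ∨
       (α ⊆ {i.castSucc, i.succ} ∧ t ∈ K.faces ∧ i ∉ t ∧ insert i t ∈ K.faces))}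

/-! ### Auxiliary lemmas -/

lemma chi_val (i k : Fin m) :
    (chi i k : ℕ) = if (k : ℕ) ≤ (i : ℕ) then (k : ℕ) else (k : ℕ) + 1 := by
  unfold chi; split <;> simp

lemma chi_inj (i : Fin m) : Function.Injective (chi i) := by
  intro a b h
  have := congrArg (Fin.val) h
  rw [chi_val, chi_val] at this
  apply Fin.ext
  split at this <;> split at this <;> omega

lemma chi_ne_succ (i k : Fin m) : chi i k ≠ i.succ := by
  intro h
  have := congrArg (Fin.val) h
  rw [chi_val] at this
  simp only [Fin.val_succ] at this
  split at this <;> omega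

lemma chi_eq_castSucc_iff (i k : Fin m) : chi i k = i.castSucc ↔ k = i := by
  constructor
  · intro h
    have := congrArg (Fin.val) h
    rw [chi_val] at this
    simp only [Fin.coe_castSucc] at this
    apply Fin.ext
    split at this <;> omega
  · rintro rfl; simp [chi]

lemma castSucc_ne_succ' (i : Fin m) : i.castSucc ≠ i.succ := by
  intro h
  have := congrArg (Fin.val) h
  simp at this

/-- a set is a face iff it contains no missing face. -/
lemma mem_faces_iff (K : ASC m) (σ : Finset (Fin m)) :
    σ ∈ K.faces ↔ ∀ τ, IsMissingFace K τ → ¬ τ ⊆ σ := by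
  constructor
  · intro h τ hτ hsub
    exact hτ.1 (K.down_closed h hsub)
  · intro h
    by_contra hσ
    have : ∀ σ : Finset (Fin m), σ ∉ K.faces → ∃ τ, τ ⊆ σ ∧ IsMissingFace K τ := by
      intro σ
      induction σ using Finset.strongInduction with
      | _ σ ih =>
        intro hσ
        by_cases hall : ∀ s ⊂ σ, s ∈ K.faces
        · exact ⟨σ, subset_rfl, hσ, hall⟩
        · push_neg at hall
          obtain ⟨s, hs, hsK⟩ := hall
          obtain ⟨τ, hτs, hτ⟩ := ih s hs hsK
          exact ⟨τ, hτs.trans hs.subset, hτ⟩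
    obtain ⟨τ, hsub, hτ⟩ := this σ hσ
    exact h τ hτ hsub

lemma sum_blk (i : Fin m) (s : Finset (Fin m)) :
    ∑ l ∈ s, (if l = i then 2 else 1) = s.card + (if i ∈ s then 1 else 0) := by
  have : ∑ l ∈ s, (if l = i then 2 else 1)
      = ∑ l ∈ s, ((if l = i then 1 else 0) + 1) := by
    refine Finset.sum_congr rfl fun l _ => ?_
    split <;> rfl
  rw [this, Finset.sum_add_distrib, Finset.sum_const, Finset.sum_ite_eq' s i (fun _ => 1)]
  simp [smul_eq_mul]
  split <;> simp [add_comm]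

/-- the blocks of `J_i`, transferred to `Fin (m+1)`. -/
def Bm1 (i k : Fin m) : Finset (Fin (m + 1)) :=
  if k = i then {i.castSucc, i.succ} else {chi i k}

lemma Bblk_map (i : Fin m) (J : Fin m → ℕ) (hJ : J = fun k => if k = i then 2 else 1)
    (hd : dJ J = m + 1) (k : Fin m) :
    (Bblk J k).map (finCongr hd).toEmbedding = Bm1 i k := by
  have hio : ∑ l ∈ Finset.Iio k, J l = (k : ℕ) + (if (i : ℕ) < (k : ℕ) then 1 else 0) := by
    subst hJ
    rw [sum_blk, Fin.card_Iio]
    congr 1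
    by_cases h : (i : ℕ) < (k : ℕ)
    · rw [if_pos (Finset.mem_Iio.mpr (Fin.lt_def.mpr h)), if_pos h]
    · rw [if_neg (fun hc => h (Fin.lt_def.mp (Finset.mem_Iio.mp hc))), if_neg h]
  have hic : ∑ l ∈ Finset.Iic k, J l = (k : ℕ) + 1 + (if (i : ℕ) ≤ (k : ℕ) then 1 else 0) := by
    subst hJ
    rw [sum_blk, Fin.card_Iic]
    congr 1
    by_cases h : (i : ℕ) ≤ (k : ℕ)
    · rw [if_pos (Finset.mem_Iic.mpr (Fin.le_def.mpr h)), if_pos h]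
    · rw [if_neg (fun hc => h (Fin.le_def.mp (Finset.mem_Iic.mp hc))), if_neg h]
  ext r
  rw [Finset.mem_map_equiv]
  simp only [Bblk, Finset.mem_filter, Finset.mem_univ, true_and, hio, hic]
  have hval : (((finCongr hd).symm r : Fin (dJ J)) : ℕ) = (r : ℕ) := rfl
  rw [hval]
  unfold Bm1
  by_cases hk : k = i
  · subst hk
    rw [if_pos rfl]
    simp only [Finset.mem_insert, Finset.mem_singleton, Fin.ext_iff,
      Fin.coe_castSucc, Fin.val_succ]
    split_ifs <;> omega
  · have hkv : (k : ℕ) ≠ (i : ℕ) := fun h => hk (Fin.ext h)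
    rw [if_neg hk]
    simp only [Finset.mem_singleton, Fin.ext_iff, chi_val]
    split_ifs <;> omega

/-- the support of `s`: those blocks entirely contained in `s`. -/
def suppF (i : Fin m) (s : Finset (Fin (m + 1))) : Finset (Fin m) :=
  Finset.univ.filter fun k => Bm1 i k ⊆ s

lemma mem_suppF {i : Fin m} {s : Finset (Fin (m + 1))} {k : Fin m} :
    k ∈ suppF i s ↔ Bm1 i k ⊆ s := by
  simp [suppF]

lemma mem_suppF_ne {i : Fin m} {s : Finset (Fin (m + 1))} {k : Fin m} (hk : k ≠ i) :
    k ∈ suppF i s ↔ chi i k ∈ s := by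
  rw [mem_suppF, Bm1, if_neg hk, Finset.singleton_subset_iff]

lemma mem_suppF_self {i : Fin m} {s : Finset (Fin (m + 1))} :
    i ∈ suppF i s ↔ i.castSucc ∈ s ∧ i.succ ∈ s := by
  rw [mem_suppF, Bm1, if_pos rfl, Finset.insert_subset_iff, Finset.singleton_subset_iff]

lemma chi_surj (i : Fin m) (r : Fin (m + 1)) :
    r = i.castSucc ∨ r = i.succ ∨ ∃ k : Fin m, k ≠ i ∧ chi i k = r := by
  by_cases h1 : (r : ℕ) = (i : ℕ)
  · exact Or.inl (Fin.ext (by simpa using h1))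
  by_cases h2 : (r : ℕ) = (i : ℕ) + 1
  · exact Or.inr (Or.inl (Fin.ext (by simpa using h2)))
  refine Or.inr (Or.inr ?_)
  by_cases h3 : (r : ℕ) < (i : ℕ)
  · refine ⟨⟨(r : ℕ), lt_trans h3 i.isLt⟩, ?_, ?_⟩
    · intro h; have := congrArg Fin.val h; simp at this; omega
    · apply Fin.ext; rw [chi_val]; simp only [Fin.val_mk]; split_ifs <;> omega
  · have hr : (i : ℕ) + 1 < (r : ℕ) := by omega
    have hrm : (r : ℕ) - 1 < m := by have := r.isLt; omega
    refine ⟨⟨(r : ℕ) - 1, hrm⟩, ?_, ?_⟩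
    · intro h; have := congrArg Fin.val h; simp at this; omega
    · apply Fin.ext; rw [chi_val]; simp only [Fin.val_mk]; split_ifs <;> omega

lemma supp_iff_wedge (K : ASC m) (i : Fin m) (s : Finset (Fin (m + 1))) :
    suppF i s ∈ K.faces ↔ s ∈ wedgeFaces K i := by
  constructor
  · intro hs
    set t : Finset (Fin m) := (suppF i s).erase i with ht
    set α : Finset (Fin (m + 1)) := s ∩ {i.castSucc, i.succ} with hα
    have htK : t ∈ K.faces := K.down_closed hs (Finset.erase_subset _ _)
    have hit : i ∉ t := Finset.notMem_erase _ _
    have hchiFt : chiF i t ⊆ s := by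
      intro r hr
      obtain ⟨k, hk, rfl⟩ := Finset.mem_image.mp hr
      have hkne : k ≠ i := Finset.ne_of_mem_erase hk
      exact (mem_suppF_ne hkne).mp (Finset.mem_of_mem_erase hk)
    have hsplit : s = α ∪ chiF i t := by
      apply Finset.Subset.antisymm
      · intro r hr
        rcases chi_surj i r with h | h | ⟨k, hk, hkr⟩
        · exact Finset.mem_union_left _ (Finset.mem_inter.mpr ⟨hr, by simp [h]⟩)
        · exact Finset.mem_union_left _ (Finset.mem_inter.mpr ⟨hr, by simp [h]⟩)
        · subst hkr
          have : k ∈ t := by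
            rw [ht, Finset.mem_erase]
            exact ⟨hk, (mem_suppF_ne hk).mpr hr⟩
          exact Finset.mem_union_right _ (Finset.mem_image.mpr ⟨k, this, rfl⟩)
      · exact Finset.union_subset Finset.inter_subset_left hchiFt
    refine ⟨α, t, hsplit, ?_⟩
    by_cases hboth : i.castSucc ∈ s ∧ i.succ ∈ s
    · refine Or.inr (Or.inr ⟨Finset.inter_subset_right, htK, hit, ?_⟩)
      have : insert i t = suppF i s := by
        rw [ht, Finset.insert_erase (mem_suppF_self.mpr hboth)]
      rw [this]; exact hs
    · rw [not_and_or] at hboth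
      rcases hboth with h | h
      · refine Or.inr (Or.inl ⟨?_, htK, hit⟩)
        intro r hr
        rw [hα, Finset.mem_inter] at hr
        rcases Finset.mem_insert.mp hr.2 with h1 | h1
        · exact absurd (h1 ▸ hr.1) h
        · exact h1
      · refine Or.inl ⟨?_, htK, hit⟩
        intro r hr
        rw [hα, Finset.mem_inter] at hr
        rcases Finset.mem_insert.mp hr.2 with h1 | h1
        · simp [h1]
        · exact absurd ((Finset.mem_singleton.mp h1) ▸ hr.1) h
  · rintro ⟨α, t, rfl, hcase⟩
    have key : ∀ k : Fin m, k ≠ i → α ⊆ {i.castSucc, i.succ} →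
        k ∈ suppF i (α ∪ chiF i t) → k ∈ t := by
      intro k hk hα hks
      have hchi : chi i k ∈ α ∪ chiF i t := (mem_suppF_ne hk).mp hks
      rcases Finset.mem_union.mp hchi with h | h
      · have := hα h
        rcases Finset.mem_insert.mp this with h1 | h1
        · exact absurd ((chi_eq_castSucc_iff i k).mp h1) hk
        · exact absurd (Finset.mem_singleton.mp h1) (chi_ne_succ i k)
      · obtain ⟨k', hk', hkk'⟩ := Finset.mem_image.mp h
        exact (chi_inj i hkk') ▸ hk'
    rcases hcase with ⟨hα, htK, hit⟩ | ⟨hα, htK, hit⟩ | ⟨hα, htK, hit, hins⟩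
    · refine K.down_closed htK (fun k hk => ?_)
      have hki : k ≠ i := by
        intro hik
        have hsucc : i.succ ∈ α ∪ chiF i t := (mem_suppF_self.mp (hik ▸ hk)).2
        rcases Finset.mem_union.mp hsucc with h | h
        · exact castSucc_ne_succ' i (Finset.mem_singleton.mp (hα h)).symm
        · obtain ⟨k', _, hkk'⟩ := Finset.mem_image.mp h
          exact chi_ne_succ i k' hkk'
      exact key k hki (hα.trans (by intro x hx; simp [Finset.mem_singleton.mp hx])) hk
    · refine K.down_closed htK (fun k hk => ?_)
      have hki : k ≠ i := by
        intro hik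
        have hcs : i.castSucc ∈ α ∪ chiF i t := (mem_suppF_self.mp (hik ▸ hk)).1
        rcases Finset.mem_union.mp hcs with h | h
        · exact castSucc_ne_succ' i (Finset.mem_singleton.mp (hα h))
        · obtain ⟨k', hk', hkk'⟩ := Finset.mem_image.mp h
          exact hit (((chi_eq_castSucc_iff i k').mp hkk') ▸ hk')
      exact key k hki (hα.trans (by intro x hx; simp [Finset.mem_singleton.mp hx])) hk
    · refine K.down_closed hins (fun k hk => ?_)
      by_cases hki : k = i
      · exact hki ▸ Finset.mem_insert_self _ _
      · exact Finset.mem_insert_of_mem (key k hki hα hk)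

lemma KJ_iff (K : ASC m) (i : Fin m) (J : Fin m → ℕ)
    (hJ : J = fun k => if k = i then 2 else 1) (hd : dJ J = m + 1)
    (σ : Finset (Fin (dJ J))) :
    σ ∈ KJfaces K J ↔ suppF i (σ.map (finCongr hd).toEmbedding) ∈ K.faces := by
  have hsub : ∀ τ : Finset (Fin m),
      (τ.biUnion (Bblk J) ⊆ σ ↔ τ ⊆ suppF i (σ.map (finCongr hd).toEmbedding)) := by
    intro τ
    rw [← Finset.map_subset_map (f := (finCongr hd).toEmbedding)]
    have hmap : (τ.biUnion (Bblk J)).map (finCongr hd).toEmbedding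
        = τ.biUnion (Bm1 i) := by
      ext r
      rw [Finset.mem_map_equiv]
      simp only [Finset.mem_biUnion]
      constructor
      · rintro ⟨k, hk, hr⟩
        refine ⟨k, hk, ?_⟩
        rw [← Bblk_map i J hJ hd k, Finset.mem_map_equiv]
        exact hr
      · rintro ⟨k, hk, hr⟩
        refine ⟨k, hk, ?_⟩
        rw [← Bblk_map i J hJ hd k, Finset.mem_map_equiv] at hr
        exact hr
    rw [hmap, Finset.biUnion_subset]
    constructor
    · intro h k hk
      exact mem_suppF.mpr (h k hk)
    · intro h k hk
      exact mem_suppF.mp (h hk)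
  rw [mem_faces_iff]
  constructor
  · intro h τ hτ hsubτ
    exact h τ hτ ((hsub τ).mpr hsubτ)
  · intro h τ hτ hsubτ
    exact h τ hτ ((hsub τ).mp hsubτ)

theorem stmt10 (K : ASC m) (i : Fin m) (J : Fin m → ℕ)
    (hJ : J = fun k => if k = i then 2 else 1) (hd : dJ J = m + 1) :
    (fun s : Finset (Fin (dJ J)) => s.map (finCongr hd).toEmbedding) '' KJfaces K J =
      wedgeFaces K i := by
  ext s
  simp only [Set.mem_image]
  constructor
  · rintro ⟨σ, hσ, rfl⟩
    exact (supp_iff_wedge K i _).mp ((KJ_iff K i J hJ hd σ).mp hσ)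
  · intro hs
    refine ⟨s.map (finCongr hd.symm).toEmbedding, ?_, ?_⟩
    · rw [KJ_iff K i J hJ hd]
      have hmap : ((s.map (finCongr hd.symm).toEmbedding).map (finCongr hd).toEmbedding) = s := by
        ext r
        rw [Finset.mem_map_equiv, Finset.mem_map_equiv]
        simp
      rw [hmap, supp_iff_wedge]
      exact hs
    · ext r
      rw [Finset.mem_map_equiv, Finset.mem_map_equiv]
      simp
end

section
/- Let K be an abstract simplicial complex on [m]. Define the cap product ⌢ : C^*((D^1,S^0)^K) ⊗ C_*((D^1,S^0)^K) → C_*((D^1,S^0)^K) on basis elements by u^σ t^τ ⌢ u_{σ''} ε_{τ''} = (−1)^{e} Σ_{γ ⊆ τ∖σ''} u_{σ''∖σ} ε_{τ''∖γ} if σ ⊆ σ'' and τ ⊆ σ''∪τ'', where e = Σ_{i∈σ} card{j ∈ σ''∖σ : j > i} mod 2, and u^σ t^τ ⌢ u_{σ''} ε_{τ''} = 0 otherwise. Then for all basis elements, with p = card(σ) and r = card(σ''), the Leibniz identity ∂(u^σ t^τ ⌢ u_{σ''} ε_{τ''}) = (−1)^{r−p} d(u^σ t^τ) ⌢ u_{σ''}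 ε_{τ''} + u^σ t^τ ⌢ ∂(u_{σ''} ε_{τ''}) holds. -/
variable {m : ℕ}

open Classical in
/-- the coboundary `d(u^σ t^τ) = ∑_{i ∈ τ, σ∪{i} ∈ K} (-1)^{(i,σ)} u^{σ∪{i}} t^{τ∖{i}}` -/
noncomputable def DScob (K : ASC m) : DSChain K →ₗ[ℤ] DSChain K :=
  Finsupp.lift (DSChain K) ℤ (DSIdx K) fun b =>
    ∑ i ∈ b.1.2,
      if h : insert i b.1.1 ∈ K.faces then
        csg i b.1.1 •
          Finsupp.single (⟨(insert i b.1.1, b.1.2.erase i),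
            ⟨h, by
              refine Finset.disjoint_left.2 fun a ha hb => ?_
              rcases Finset.mem_insert.1 ha with h' | h'
              · exact (Finset.mem_erase.1 hb).1 h'
              · exact (Finset.disjoint_left.1 b.2.2 h') (Finset.mem_of_mem_erase hb)⟩⟩ :
              DSIdx K) (1 : ℤ)
      else 0

open Classical in
/-- the cap product of basis elements:
`u^σ t^τ ⌢ u_{σ''} ε_{τ''} = (-1)^e ∑_{γ ⊆ τ∖σ''} u_{σ''∖σ} ε_{τ''∖γ}`
when `σ ⊆ σ''` and `τ ⊆ σ'' ∪ τ''`, and `0` otherwise, where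
`e = ∑_{i ∈ σ} card {j ∈ σ''∖σ : j > i}`. -/
noncomputable def capMon (K : ASC m) (a b : DSIdx K) : DSChain K :=
  if a.1.1 ⊆ b.1.1 ∧ a.1.2 ⊆ b.1.1 ∪ b.1.2 then
    ((-1 : ℤ) ^ (∑ i ∈ a.1.1, ((b.1.1 \ a.1.1).filter (fun j => i < j)).card)) •
      ∑ γ ∈ (a.1.2 \ b.1.1).powerset,
        Finsupp.single (⟨(b.1.1 \ a.1.1, b.1.2 \ γ),
          ⟨K.down_closed b.2.1 (Finset.sdiff_subset),
           Finset.disjoint_of_subset_left Finset.sdiff_subset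
             (Finset.disjoint_of_subset_right Finset.sdiff_subset b.2.2)⟩⟩ : DSIdx K)
          (1 : ℤ)
  else 0

/-- the cap product, extended bilinearly -/
noncomputable def capProd (K : ASC m) : DSChain K →ₗ[ℤ] DSChain K →ₗ[ℤ] DSChain K :=
  Finsupp.lift (DSChain K →ₗ[ℤ] DSChain K) ℤ (DSIdx K) fun a =>
    Finsupp.lift (DSChain K) ℤ (DSIdx K) fun b => capMon K a b

/-!
Write `S = σ'' \ σ` and `P = τ \ σ''`. Unless `σ ⊆ σ''` and `τ ⊆ σ'' ∪ τ''`, the same inclusions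
fail for every pair occurring in `d(u^σ t^τ)` and `∂(u_{σ''} ε_{τ''})`, and all three terms vanish.
Otherwise every word involved is some `u_{S∖k} ε_…` with `k ∈ S`. The words of `∂(a ⌢ b)` are the
`u_{S∖k} ε_{(τ''∖γ)∪k}`, `γ ⊆ P`: exactly the terms of `a ⌢ u_{σ''∖k} ε_{τ''∪k}` whose `γ` avoids
`k`. When `k ∈ τ`, the terms of `a ⌢ u_{σ''∖k} ε_{τ''∪k}` whose `γ` contains `k` are the
`u_{S∖k} ε_{τ''∖γ}`, `γ ⊆ P`, and they cancel `(-1)^{r-p} u^{σ∪k} t^{τ∖k} ⌢ b`. The signs match by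
counting inversions. None of this depends on what the basis words are, so the identity is proved
for an arbitrary word-valued function `w`.
-/

open Finset

def capSign (σ S : Finset (Fin m)) : ℤ :=
  (-1) ^ (∑ i ∈ σ, (S.filter (fun j => i < j)).card)

section Signs

variable {σ σ'' S A : Finset (Fin m)} {i k : Fin m}

lemma csg_union (h : Disjoint S A) : csg i (S ∪ A) = csg i S * csg i A := by
  rw [csg, csg, csg, filter_union, card_union_of_disjoint (disjoint_filter_filter h), pow_add]

lemma csg_erase_self : csg i (S.erase i) = csg i S := by
  rw [csg, csg, filter_erase, erase_eq_of_notMem (by simp)]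

lemma csg_mul_csg_sdiff (h : σ ⊆ σ'') : csg i σ * csg i (σ'' \ σ) = csg i σ'' := by
  rw [← csg_union disjoint_sdiff, union_sdiff_of_subset h]

lemma capSign_eq_capSign_erase_mul_csg (hk : k ∈ S) :
    capSign σ S = capSign σ (S.erase k) * csg k σ := by
  have hsplit : ∀ i, (S.filter (fun j => i < j)).card =
      ((S.erase k).filter (fun j => i < j)).card + if i < k then 1 else 0 := fun i => by
    rw [card_filter, card_filter, sum_erase_add _ _ hk]
  rw [capSign, capSign, csg, ← pow_add, card_filter, ← sum_add_distrib]
  simp only [hsplit]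

lemma capSign_insert (hi : i ∉ σ) :
    capSign (insert i σ) S = (-1) ^ (S.filter (fun j => i < j)).card * capSign σ S := by
  rw [capSign, capSign, sum_insert hi, pow_add]

lemma neg_one_pow_card_eq_csg_mul (hi : i ∉ A) :
    (-1 : ℤ) ^ A.card = csg i A * (-1) ^ (A.filter (fun j => i < j)).card := by
  have hlt : A.filter (fun j => ¬ j < i) = A.filter (fun j => i < j) :=
    filter_congr fun j hj => by
      rw [not_lt, le_iff_lt_or_eq, or_iff_left fun h : i = j => hi (h ▸ hj)]
  rw [csg, ← pow_add, ← card_filter_add_card_filter_not (fun j => j < i), hlt]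

lemma capSign_mul_csg_sdiff (hσ : σ ⊆ σ'') (hk : k ∈ σ'' \ σ) :
    capSign σ (σ'' \ σ) * csg k (σ'' \ σ) = csg k σ'' * capSign σ ((σ'' \ σ).erase k) := by
  rw [capSign_eq_capSign_erase_mul_csg hk, ← csg_mul_csg_sdiff hσ]
  ring

lemma neg_one_pow_mul_csg_mul_capSign_insert (hσ : σ ⊆ σ'') (hi : i ∈ σ'' \ σ) :
    (-1) ^ (σ'' \ σ).card * (csg i σ * capSign (insert i σ) ((σ'' \ σ).erase i)) =
      -(csg i σ'' * capSign σ ((σ'' \ σ).erase i)) := by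
  set A := (σ'' \ σ).erase i
  set t : ℤ := (-1) ^ (A.filter (fun j => i < j)).card
  have ht : t * t = 1 := by rw [← pow_add, ← two_mul, pow_mul]; simp
  rw [← card_erase_add_one hi, pow_succ, neg_one_pow_card_eq_csg_mul (notMem_erase i _),
    capSign_insert (mem_sdiff.1 hi).2, ← csg_mul_csg_sdiff hσ, ← csg_erase_self (S := σ'' \ σ)]
  linear_combination (-(csg i A) * csg i σ * capSign σ A) * ht

end Signs

section Formulas

variable {M : Type*} [AddCommGroup M] (w : Finset (Fin m) → Finset (Fin m) → M)

def bndFormula (s t : Finset (Fin m)) : M :=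
  ∑ i ∈ s, csg i s • w (s.erase i) (insert i t)

def cobFormula (s t : Finset (Fin m)) : M :=
  ∑ i ∈ t, csg i s • w (insert i s) (t.erase i)

def capFormula (σ τ σ'' τ'' : Finset (Fin m)) : M :=
  if σ ⊆ σ'' ∧ τ ⊆ σ'' ∪ τ'' then
    capSign σ (σ'' \ σ) • ∑ γ ∈ (τ \ σ'').powerset, w (σ'' \ σ) (τ'' \ γ)
  else 0

variable {w} {σ τ σ'' τ'' : Finset (Fin m)}

lemma capFormula_of_subset (hσ : σ ⊆ σ'') (hτ : τ ⊆ σ'' ∪ τ'') :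
    capFormula w σ τ σ'' τ'' =
      capSign σ (σ'' \ σ) • ∑ γ ∈ (τ \ σ'').powerset, w (σ'' \ σ) (τ'' \ γ) :=
  if_pos ⟨hσ, hτ⟩

lemma capFormula_of_not_subset (h : ¬(σ ⊆ σ'' ∧ τ ⊆ σ'' ∪ τ'')) :
    capFormula w σ τ σ'' τ'' = 0 :=
  if_neg h

lemma capFormula_bndFormula (hσ : σ ⊆ σ'') (hτ : τ ⊆ σ'' ∪ τ'') :
    capFormula (bndFormula w) σ τ σ'' τ'' =
      ∑ k ∈ σ'' \ σ, (csg k σ'' * capSign σ ((σ'' \ σ).erase k)) •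
        ∑ γ ∈ (τ \ σ'').powerset, w ((σ'' \ σ).erase k) (insert k τ'' \ γ) := by
  rw [capFormula_of_subset hσ hτ]
  simp only [bndFormula, smul_sum]
  rw [sum_comm]
  refine sum_congr rfl fun k hk => sum_congr rfl fun γ hγ => ?_
  have hkγ : k ∉ γ := fun h =>
    (mem_sdiff.1 (mem_powerset.1 hγ h)).2 (mem_sdiff.1 hk).1
  rw [smul_smul, capSign_mul_csg_sdiff hσ hk, insert_sdiff_of_notMem _ hkγ]

lemma cobFormula_capFormula (hσ : σ ⊆ σ'') (hτ : τ ⊆ σ'' ∪ τ'') (hστ : Disjoint σ τ) :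
    cobFormula (fun s t => capFormula w s t σ'' τ'') σ τ =
      ∑ i ∈ (σ'' \ σ) ∩ τ, (csg i σ * capSign (insert i σ) ((σ'' \ σ).erase i)) •
        ∑ γ ∈ (τ \ σ'').powerset, w ((σ'' \ σ).erase i) (τ'' \ γ) := by
  rw [cobFormula, ← sum_subset inter_subset_right]
  · refine sum_congr rfl fun i hi => ?_
    obtain ⟨hiσ'', -⟩ := mem_sdiff.1 (mem_inter.1 hi).1
    rw [capFormula_of_subset (insert_subset hiσ'' hσ)
      ((erase_subset _ _).trans hτ), sdiff_insert, erase_sdiff_comm,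
      erase_eq_of_notMem fun h => (mem_sdiff.1 h).2 hiσ'', smul_smul]
  · intro i hiτ hi
    have hiσ'' : i ∉ σ'' := fun h => hi (mem_inter.2
      ⟨mem_sdiff.2 ⟨h, disjoint_right.1 hστ hiτ⟩, hiτ⟩)
    rw [capFormula_of_not_subset fun h => hiσ'' (h.1 (mem_insert_self i σ)), smul_zero]

lemma capFormula_erase_insert (hσ : σ ⊆ σ'') (hτ : τ ⊆ σ'' ∪ τ'') (hστ'' : Disjoint σ'' τ'')
    {k : Fin m} (hk : k ∈ σ'' \ σ) :
    capFormula w σ τ (σ''.erase k) (insert k τ'') =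
      capSign σ ((σ'' \ σ).erase k) •
        (∑ γ ∈ (τ \ σ'').powerset, w ((σ'' \ σ).erase k) (insert k τ'' \ γ) +
          if k ∈ τ then ∑ γ ∈ (τ \ σ'').powerset, w ((σ'' \ σ).erase k) (τ'' \ γ) else 0) := by
  obtain ⟨hkσ'', hkσ⟩ := mem_sdiff.1 hk
  have hsub : τ ⊆ σ''.erase k ∪ insert k τ'' := fun x hx => by
    rcases mem_union.1 (hτ hx) with h | h
    · by_cases hxk : x = k
      · exact mem_union_right _ (hxk ▸ mem_insert_self k τ'')
      · exact mem_union_left _ (mem_erase.2 ⟨hxk, h⟩)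
    · exact mem_union_right _ (mem_insert_of_mem h)
  rw [capFormula_of_subset (subset_erase.2 ⟨hσ, hkσ⟩) hsub, erase_sdiff_comm]
  congr 1
  split_ifs with hkτ
  · have hkP : k ∉ τ \ σ'' := fun h => (mem_sdiff.1 h).2 hkσ''
    rw [sdiff_erase hkτ, sum_powerset_insert hkP]
    congr 1
    refine sum_congr rfl fun γ _ => ?_
    rw [insert_sdiff_insert,
      sdiff_insert_of_notMem (disjoint_left.1 hστ'' hkσ'')]
  · have hP : τ \ σ''.erase k = τ \ σ'' := by
      ext x
      by_cases hxk : x = k <;> simp_all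
    rw [add_zero, hP]

lemma bndFormula_capFormula (hσ : σ ⊆ σ'') (hτ : τ ⊆ σ'' ∪ τ'') (hστ'' : Disjoint σ'' τ'') :
    bndFormula (fun s t => capFormula w σ τ s t) σ'' τ'' =
      ∑ k ∈ σ'' \ σ, (csg k σ'' * capSign σ ((σ'' \ σ).erase k)) •
          ∑ γ ∈ (τ \ σ'').powerset, w ((σ'' \ σ).erase k) (insert k τ'' \ γ) +
        ∑ i ∈ (σ'' \ σ) ∩ τ, (csg i σ'' * capSign σ ((σ'' \ σ).erase i)) •
          ∑ γ ∈ (τ \ σ'').powerset, w ((σ'' \ σ).erase i) (τ'' \ γ) := by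
  rw [bndFormula, ← sum_subset sdiff_subset]
  · rw [← sum_ite_mem, ← sum_add_distrib]
    refine sum_congr rfl fun k hk => ?_
    rw [capFormula_erase_insert hσ hτ hστ'' hk, smul_smul, smul_add, smul_ite, smul_zero]
  · intro k hkσ'' hk
    have hkσ : k ∈ σ := by_contra fun h => hk (mem_sdiff.2 ⟨hkσ'', h⟩)
    rw [capFormula_of_not_subset fun h => notMem_erase k σ'' (h.1 hkσ), smul_zero]

lemma cobFormula_capFormula_of_not_subset (hC : ¬(σ ⊆ σ'' ∧ τ ⊆ σ'' ∪ τ'')) :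
    cobFormula (fun s t => capFormula w s t σ'' τ'') σ τ = 0 := by
  refine sum_eq_zero fun i _ => ?_
  refine (congrArg _ (capFormula_of_not_subset fun h => hC ⟨?_, fun x hx => ?_⟩)).trans
    (smul_zero _)
  · exact (subset_insert i σ).trans h.1
  · by_cases hxi : x = i
    · exact mem_union_left _ (h.1 (hxi ▸ mem_insert_self i σ))
    · exact h.2 (mem_erase.2 ⟨hxi, hx⟩)

lemma bndFormula_capFormula_of_not_subset (hC : ¬(σ ⊆ σ'' ∧ τ ⊆ σ'' ∪ τ'')) :
    bndFormula (fun s t => capFormula w σ τ s t) σ'' τ'' = 0 := by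
  refine sum_eq_zero fun k hk => ?_
  have hsub : σ''.erase k ∪ insert k τ'' ⊆ σ'' ∪ τ'' :=
    union_subset ((erase_subset k σ'').trans subset_union_left)
      (insert_subset (mem_union_left _ hk) subset_union_right)
  exact (congrArg _ (capFormula_of_not_subset fun h =>
    hC ⟨h.1.trans (erase_subset k σ''), h.2.trans hsub⟩)).trans (smul_zero _)

lemma capFormula_leibniz (hστ : Disjoint σ τ) (hστ'' : Disjoint σ'' τ'') :
    capFormula (bndFormula w) σ τ σ'' τ'' =
      (((σ''.card : ℤ) - σ.card).negOnePow : ℤ) •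
          cobFormula (fun s t => capFormula w s t σ'' τ'') σ τ +
        bndFormula (fun s t => capFormula w σ τ s t) σ'' τ'' := by
  by_cases hC : σ ⊆ σ'' ∧ τ ⊆ σ'' ∪ τ''
  · obtain ⟨hσ, hτ⟩ := hC
    have hsign : (((σ''.card : ℤ) - σ.card).negOnePow : ℤ) = (-1) ^ (σ'' \ σ).card := by
      rw [← Nat.cast_sub (card_le_card hσ), Int.coe_negOnePow_natCast,
        card_sdiff_of_subset hσ]
    have hcancel : ∀ i ∈ (σ'' \ σ) ∩ τ,
        (-1 : ℤ) ^ (σ'' \ σ).card • (csg i σ * capSign (insert i σ) ((σ'' \ σ).erase i)) •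
          ∑ γ ∈ (τ \ σ'').powerset, w ((σ'' \ σ).erase i) (τ'' \ γ) =
        -((csg i σ'' * capSign σ ((σ'' \ σ).erase i)) •
          ∑ γ ∈ (τ \ σ'').powerset, w ((σ'' \ σ).erase i) (τ'' \ γ)) := fun i hi => by
      rw [smul_smul, neg_one_pow_mul_csg_mul_capSign_insert hσ (mem_inter.1 hi).1,
        neg_smul]
    rw [capFormula_bndFormula hσ hτ, cobFormula_capFormula hσ hτ hστ,
      bndFormula_capFormula hσ hτ hστ'', hsign, smul_sum, sum_congr rfl hcancel,
      sum_neg_distrib]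
    abel
  · rw [capFormula_of_not_subset hC, cobFormula_capFormula_of_not_subset hC,
      bndFormula_capFormula_of_not_subset hC, smul_zero, add_zero]

end Formulas

section Cells

variable {K : ASC m}

open Classical in
/-- The basis word `u_s ε_t`, and `0` when `(s, t)` is not a basis index. -/
noncomputable def DSword (K : ASC m) (s t : Finset (Fin m)) : DSChain K :=
  if h : s ∈ K.faces ∧ Disjoint s t then Finsupp.single (⟨(s, t), h⟩ : DSIdx K) 1 else 0

lemma DSword_of_mem {s t : Finset (Fin m)} (h : s ∈ K.faces ∧ Disjoint s t) :
    DSword K s t = Finsupp.single (⟨(s, t), h⟩ : DSIdx K) 1 :=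
  dif_pos h

lemma DSword_of_notMem {s t : Finset (Fin m)} (h : s ∉ K.faces) : DSword K s t = 0 :=
  dif_neg fun h' => h h'.1

lemma lift_single {M : Type*} [AddCommMonoid M] [Module ℤ M] (f : DSIdx K → M) (a : DSIdx K) :
    Finsupp.lift M ℤ (DSIdx K) f (Finsupp.single a 1) = f a := by
  rw [Finsupp.lift_apply, Finsupp.sum_single_index (zero_smul ℤ (f a)), one_smul]

lemma DSbnd_single (a : DSIdx K) :
    DSbnd K (Finsupp.single a 1) = bndFormula (DSword K) a.1.1 a.1.2 := by
  rw [DSbnd, lift_single]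
  exact sum_congr rfl fun i _ => congrArg _ (DSword_of_mem _).symm

lemma DScob_single (a : DSIdx K) :
    DScob K (Finsupp.single a 1) = cobFormula (DSword K) a.1.1 a.1.2 := by
  rw [DScob, lift_single]
  refine sum_congr rfl fun i _ => ?_
  by_cases h : insert i a.1.1 ∈ K.faces
  · erw [dif_pos h]
    exact congrArg _ (DSword_of_mem _).symm
  · erw [dif_neg h, DSword_of_notMem h, smul_zero]

lemma capProd_single_single (a b : DSIdx K) :
    capProd K (Finsupp.single a 1) (Finsupp.single b 1) =
      capFormula (DSword K) a.1.1 a.1.2 b.1.1 b.1.2 := by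
  rw [capProd, lift_single, lift_single, capMon, capFormula]
  by_cases h : a.1.1 ⊆ b.1.1 ∧ a.1.2 ⊆ b.1.1 ∪ b.1.2
  · erw [if_pos h, if_pos h, capSign]
    exact congrArg _ (sum_congr rfl fun γ _ => (DSword_of_mem _).symm)
  · erw [if_neg h, if_neg h]

lemma capProd_DSword_single {s t : Finset (Fin m)} (hst : Disjoint s t) (b : DSIdx K) :
    capProd K (DSword K s t) (Finsupp.single b 1) = capFormula (DSword K) s t b.1.1 b.1.2 := by
  by_cases hs : s ∈ K.faces
  · rw [DSword_of_mem ⟨hs, hst⟩]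
    exact capProd_single_single _ b
  · rw [DSword_of_notMem hs, map_zero, LinearMap.zero_apply,
      capFormula_of_not_subset fun h => hs (K.down_closed b.2.1 h.1)]

lemma DSbnd_capFormula (σ τ : Finset (Fin m)) (b : DSIdx K) :
    DSbnd K (capFormula (DSword K) σ τ b.1.1 b.1.2) =
      capFormula (bndFormula (DSword K)) σ τ b.1.1 b.1.2 := by
  unfold capFormula
  split_ifs
  · rw [map_zsmul, map_sum]
    refine congrArg _ (sum_congr rfl fun γ _ => ?_)
    rw [DSword_of_mem ⟨K.down_closed b.2.1 sdiff_subset,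
      b.2.2.mono sdiff_subset sdiff_subset⟩]
    exact DSbnd_single _
  · exact map_zero _

lemma capProd_cobFormula_single (a b : DSIdx K) :
    capProd K (cobFormula (DSword K) a.1.1 a.1.2) (Finsupp.single b 1) =
      cobFormula (fun s t => capFormula (DSword K) s t b.1.1 b.1.2) a.1.1 a.1.2 := by
  simp only [cobFormula, map_sum, map_zsmul, LinearMap.sum_apply,
    LinearMap.smul_apply]
  refine sum_congr rfl fun i _ => ?_
  rw [capProd_DSword_single (disjoint_insert_left.2
    ⟨notMem_erase _ _, a.2.2.mono_right (erase_subset _ _)⟩)]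

lemma capProd_single_bndFormula (a b : DSIdx K) :
    capProd K (Finsupp.single a 1) (bndFormula (DSword K) b.1.1 b.1.2) =
      bndFormula (fun s t => capFormula (DSword K) a.1.1 a.1.2 s t) b.1.1 b.1.2 := by
  simp only [bndFormula, map_sum, map_zsmul]
  refine sum_congr rfl fun k _ => ?_
  rw [DSword_of_mem ⟨K.down_closed b.2.1 (erase_subset _ _), disjoint_insert_right.2
    ⟨notMem_erase _ _, b.2.2.mono_left (erase_subset _ _)⟩⟩]
  exact congrArg _ (capProd_single_single a _)

end Cells

theorem stmt14 (K : ASC m) (a b : DSIdx K) :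
    DSbnd K (capProd K (Finsupp.single a 1) (Finsupp.single b 1)) =
      (((((b.1.1.card : ℤ) - (a.1.1.card : ℤ)).negOnePow : ℤ)) •
        capProd K (DScob K (Finsupp.single a 1)) (Finsupp.single b 1)) +
      capProd K (Finsupp.single a 1) (DSbnd K (Finsupp.single b 1)) := by
  rw [capProd_single_single, DSbnd_capFormula, DScob_single, DSbnd_single,
    capProd_cobFormula_single, capProd_single_bndFormula]
  exact capFormula_leibniz a.2.2 b.2.2
end
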